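/- Let ℓ ≥ 0 be an integer shift, T > ℓ a horizon, and let p̄_1, …, p̄_{T+ℓ} be vectors in ℝ^{d} such that: (i) the positional margin Δ_pos := min over pairs (i, j) with ℓ < i ≤ T, 1 ≤ j ≤ i, j ≠ i − ℓ of ( ⟨p̄_i, p̄_i⟩ − ⟨p̄_i, p̄_{j+ℓ}⟩ ) is strictly positive; (ii) the sink margin Δ_bos := min over 1 < j ≤ T of ( ⟨p̄_1, p̄_1⟩ − ⟨p̄_1, p̄_j⟩ ) is strictly positive; and (iii) there is M > 0 with |⟨p̄_i, p̄_j⟩| ≤ M for all i, j ≤ T + ℓ. Let c ∈ {0, 1}^T be arbitrary token indicators. For parameters η, ξ > 0 and each query position i with ℓ < i ≤ T, define attention logits z^{(i)}_j = η( ⟨p̄_i, p̄_{j+ℓ}⟩ + ξ c_i ⟨p̄_1, p̄_j⟩ ) for j ∈ [i], and attention scores s_{i,·} = softmax(z^{(i)}). Then for every ε ∈ (0, 1) there exist η, ξ > 0 (depending only on ε, T, Δ_pos, Δ_bos, and M) such that for every query position i with ℓ < i ≤ T: if c_i = 0 then s_{i, i−ℓ} ≥ 1 − ε, and if c_i = 1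 then s_{i, 1} ≥ 1 − ε. -/

import Mathlib

open Finset
open scoped RealInnerProductSpace

/-- Softmax concentration: if every non-target exponentiated logit is at most
`ε / T'` times the target one, the softmax score of the target is `≥ 1 - ε`. -/
lemma softmax_concentration (S : Finset ℕ) (g : ℕ → ℝ) (j₀ : ℕ) (hj₀ : j₀ ∈ S)
    (ε T' : ℝ) (hε : 0 < ε) (hT' : 0 < T') (hcard : (S.card : ℝ) ≤ T' + 1)
    (h : ∀ j ∈ S, j ≠ j₀ → Real.exp (g j) ≤ Real.exp (g j₀) * (ε / T')) :
    1 - ε ≤ Real.exp (g j₀) / ∑ j ∈ S, Real.exp (g j) := by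
  set E := Real.exp (g j₀) with hE
  have hEpos : 0 < E := Real.exp_pos _
  have hsum : ∑ j ∈ S, Real.exp (g j) ≤ E * (1 + ε) := by
    rw [← Finset.add_sum_erase _ _ hj₀]
    have h1 : ∑ j ∈ S.erase j₀, Real.exp (g j) ≤
        ∑ j ∈ S.erase j₀, E * (ε / T') := by
      refine Finset.sum_le_sum fun j hj => ?_
      exact h j (Finset.mem_of_mem_erase hj) (Finset.ne_of_mem_erase hj)
    have h2 : ∑ j ∈ S.erase j₀, E * (ε / T') = (S.erase j₀).card * (E * (ε / T')) := by
      simp [Finset.sum_const, nsmul_eq_mul]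
    have hcard' : ((S.erase j₀).card : ℝ) ≤ T' := by
      have := Finset.card_erase_of_mem hj₀
      rw [this]
      have h3 : (S.card : ℝ) ≥ 1 := by
        have : 1 ≤ S.card := Finset.card_pos.mpr ⟨j₀, hj₀⟩
        exact_mod_cast this
      push_cast [Finset.card_erase_of_mem hj₀]
      have : ((S.card - 1 : ℕ) : ℝ) = (S.card : ℝ) - 1 := by
        have : 1 ≤ S.card := Finset.card_pos.mpr ⟨j₀, hj₀⟩
        push_cast [this]
        ring
      rw [this]; linarith
    have h4 : ((S.erase j₀).card : ℝ) * (E * (ε / T')) ≤ T' * (E * (ε / T')) := by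
      apply mul_le_mul_of_nonneg_right hcard'
      positivity
    have h5 : T' * (E * (ε / T')) = E * ε := by
      field_simp
    nlinarith [h1, h2]
  have hsumpos : 0 < ∑ j ∈ S, Real.exp (g j) :=
    Finset.sum_pos (fun j _ => Real.exp_pos _) ⟨j₀, hj₀⟩
  rcases le_or_gt (1 - ε) 0 with hle | hlt
  · exact hle.trans (div_pos hEpos hsumpos).le
  · rw [le_div_iff₀ hsumpos]
    calc (1 - ε) * ∑ j ∈ S, Real.exp (g j) ≤ (1 - ε) * (E * (1 + ε)) :=
          mul_le_mul_of_nonneg_left hsum hlt.le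
      _ = E * (1 - ε ^ 2) := by ring
      _ ≤ E := by nlinarith [sq_nonneg ε]

/-- **Generalized attention chooser.** Given positional encodings
`p 1, …, p (T + ℓ)` in `ℝ^d` with a positive positional margin `Δpos`, a
positive sink margin `Δbos`, and inner products bounded by `M`, and binary
indicators `c i ∈ {0,1}`, for every `ε ∈ (0,1)` there exist scales
`η, ξ > 0` such that, for every query position `i` with `ℓ < i ≤ T`, the
softmax attention scores `s η ξ i ·` over key positions `j ∈ [1, i]` with
logits `η (⟪p i, p (j+ℓ)⟫ + ξ · c i · ⟪p 1, p j⟫)` concentrate on position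
`i - ℓ` when `c i = 0` and on the sink position `1` when `c i = 1`, each with
score at least `1 - ε`. -/
theorem generalized_attention_chooser
    {d : ℕ} (ℓ T : ℕ) (hT : ℓ < T)
    (p : ℕ → EuclideanSpace ℝ (Fin d))
    (Δpos Δbos M : ℝ) (hΔpos : 0 < Δpos) (hΔbos : 0 < Δbos) (hM : 0 < M)
    (hpos : ∀ i j, ℓ < i → i ≤ T → 1 ≤ j → j ≤ i → j ≠ i - ℓ →
      Δpos ≤ ⟪p i, p i⟫ - ⟪p i, p (j + ℓ)⟫)
    (hbos : ∀ j, 1 < j → j ≤ T → Δbos ≤ ⟪p 1, p 1⟫ - ⟪p 1, p j⟫)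
    (hbound : ∀ i j, i ≤ T + ℓ → j ≤ T + ℓ → |⟪p i, p j⟫| ≤ M)
    (c : ℕ → ℝ) (hc : ∀ i, c i = 0 ∨ c i = 1)
    (s : ℝ → ℝ → ℕ → ℕ → ℝ)
    (hs : ∀ η ξ i j, s η ξ i j =
      Real.exp (η * (⟪p i, p (j + ℓ)⟫ + ξ * c i * ⟪p 1, p j⟫)) /
        ∑ j' ∈ Finset.Icc 1 i,
          Real.exp (η * (⟪p i, p (j' + ℓ)⟫ + ξ * c i * ⟪p 1, p j'⟫))) :
    ∀ ε : ℝ, 0 < ε → ε < 1 → ∃ η ξ : ℝ, 0 < η ∧ 0 < ξ ∧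
      ∀ i, ℓ < i → i ≤ T →
        (c i = 0 → 1 - ε ≤ s η ξ i (i - ℓ)) ∧ (c i = 1 → 1 - ε ≤ s η ξ i 1) := by
  intro ε hε hε1
  have hT1 : (1 : ℝ) ≤ T := by exact_mod_cast Nat.one_le_of_lt hT
  have hTpos : (0 : ℝ) < T := by linarith
  have hratio : 1 < (T : ℝ) / ε := by
    rw [lt_div_iff₀ hε]; linarith
  set η : ℝ := Δpos⁻¹ * Real.log ((T : ℝ) / ε) with hηdef
  have hη : 0 < η := by
    apply mul_pos (inv_pos.mpr hΔpos) (Real.log_pos hratio)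
  set ξ : ℝ := (2 * M + Δpos) / Δbos with hξdef
  have hξ : 0 < ξ := by positivity
  have hηΔ : η * Δpos = Real.log ((T : ℝ) / ε) := by
    rw [hηdef, mul_comm, ← mul_assoc, mul_inv_cancel₀ hΔpos.ne', one_mul]
  refine ⟨η, ξ, hη, hξ, fun i hℓi hiT => ?_⟩
  have hmem_iℓ : i - ℓ ∈ Finset.Icc 1 i := by
    simp only [Finset.mem_Icc]
    omega
  have hmem_1 : 1 ∈ Finset.Icc 1 i := by
    simp only [Finset.mem_Icc]; omega
  have hcard : ((Finset.Icc 1 i).card : ℝ) ≤ (T : ℝ) + 1 := by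
    rw [Nat.card_Icc]
    have : i + 1 - 1 = i := by omega
    rw [this]
    have : (i : ℝ) ≤ T := by exact_mod_cast hiT
    linarith
  -- key step: logit gap ≥ η * Δpos implies exp ratio ≤ ε / T
  have hgap_exp : ∀ (L : ℕ → ℝ) (j₀ : ℕ), (∀ j ∈ Finset.Icc 1 i, j ≠ j₀ →
      η * Δpos ≤ L j₀ - L j) → ∀ j ∈ Finset.Icc 1 i, j ≠ j₀ →
      Real.exp (L j) ≤ Real.exp (L j₀) * (ε / T) := by
    intro L j₀ hgap j hj hne
    have h1 : L j ≤ L j₀ - η * Δpos := by linarith [hgap j hj hne]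
    calc Real.exp (L j) ≤ Real.exp (L j₀ - η * Δpos) := Real.exp_le_exp.mpr h1
      _ = Real.exp (L j₀) * Real.exp (-(η * Δpos)) := by
          rw [← Real.exp_add]; ring_nf
      _ = Real.exp (L j₀) * (ε / T) := by
          congr 1
          rw [hηΔ, ← Real.log_inv, Real.exp_log (by positivity)]
          field_simp
  constructor
  · intro hci0
    rw [hs]
    have hsimp : ∀ j, η * (⟪p i, p (j + ℓ)⟫ + ξ * c i * ⟪p 1, p j⟫) =
        η * ⟪p i, p (j + ℓ)⟫ := by
      intro j; rw [hci0]; ring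
    simp only [hsimp]
    refine softmax_concentration (Finset.Icc 1 i)
      (fun j => η * ⟪p i, p (j + ℓ)⟫) (i - ℓ) hmem_iℓ ε (T : ℝ) hε hTpos hcard ?_
    apply hgap_exp
    intro j hj hne
    simp only [Finset.mem_Icc] at hj
    have hiℓ : i - ℓ + ℓ = i := by omega
    rw [hiℓ]
    rw [← mul_sub]
    exact mul_le_mul_of_nonneg_left (hpos i j hℓi hiT hj.1 hj.2 hne) hη.le
  · intro hci1
    rw [hs]
    simp only [hci1, mul_one]
    refine softmax_concentration (Finset.Icc 1 i)
      (fun j => η * (⟪p i, p (j + ℓ)⟫ + ξ * ⟪p 1, p j⟫)) 1 hmem_1 ε (T : ℝ) hε hTpos hcard ?_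
    apply hgap_exp
    intro j hj hne
    simp only [Finset.mem_Icc] at hj
    have hj1 : 1 < j := lt_of_le_of_ne hj.1 (Ne.symm hne)
    have hjT : j ≤ T := le_trans hj.2 hiT
    have hb := hbos j hj1 hjT
    have hb1 : |⟪p i, p (1 + ℓ)⟫| ≤ M := hbound i (1 + ℓ) (by omega) (by omega)
    have hb2 : |⟪p i, p (j + ℓ)⟫| ≤ M := hbound i (j + ℓ) (by omega) (by omega)
    have key : Δpos ≤ (⟪p i, p (1 + ℓ)⟫ + ξ * ⟪p 1, p 1⟫) -
        (⟪p i, p (j + ℓ)⟫ + ξ * ⟪p 1, p j⟫) := by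
      have habs1 := abs_le.mp hb1
      have habs2 := abs_le.mp hb2
      have hξb : ξ * Δbos = 2 * M + Δpos := by
        rw [hξdef, div_mul_cancel₀ _ hΔbos.ne']
      have hmul := mul_le_mul_of_nonneg_left hb hξ.le
      have hdist : ξ * (⟪p 1, p 1⟫ - ⟪p 1, p j⟫) = ξ * ⟪p 1, p 1⟫ - ξ * ⟪p 1, p j⟫ := by
        ring
      linarith [hmul, hdist.symm.le, hdist.le]
    rw [← mul_sub]
    exact mul_le_mul_of_nonneg_left key hη.le
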